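/- Let Z ~ N(0,1). Then lim_{z→+∞} E[(Z − E(Z | Z > z))³ | Z > z] / Var(Z | Z > z)^{3/2} = 2. -/

import Mathlib

/-!
Substituting `t = z + s / z` turns the standard normal density on `(z, ∞)` into
`φ(z) / z · exp (-s - s² / (2 z²))` on `(0, ∞)`. Skewness is invariant under affine changes of
variable with positive slope, so the skewness of the normal law truncated at `z` is that of the
weight `exp (-s - s² / (2 z²))`. By dominated convergence its moments tend to those of `exp (-s)`,
namely `k!`, so the skewness tends to that of the standard exponential law, which is `2`.
-/

open Real MeasureTheory Filter

/-- standard normal density -/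
noncomputable def stdPhi (t : ℝ) : ℝ := (Real.sqrt (2 * Real.pi))⁻¹ * Real.exp (-t ^ 2 / 2)

/-- standard normal cumulative distribution function -/
noncomputable def stdCDF (x : ℝ) : ℝ := ∫ t in Set.Iic x, stdPhi t

/-- mean of the standard normal truncated below at `z` -/
noncomputable def truncMean (z : ℝ) : ℝ :=
  ∫ t in Set.Ioi z, t * (stdPhi t / (1 - stdCDF z))

/-- variance of the standard normal truncated below at `z` -/
noncomputable def truncVar (z : ℝ) : ℝ :=
  ∫ t in Set.Ioi z, (t - truncMean z) ^ 2 * (stdPhi t / (1 - stdCDF z))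

open Finset ProbabilityTheory Topology

lemma integrableOn_pow_mul_exp_neg (k : ℕ) :
    IntegrableOn (fun s : ℝ => s ^ k * exp (-s)) (Set.Ioi 0) := by
  refine (Real.GammaIntegral_convergent (s := k + 1) (by positivity)).congr_fun
    (fun s _ => ?_) measurableSet_Ioi
  simp only [add_sub_cancel_right, Real.rpow_natCast, mul_comm]

lemma integral_pow_mul_exp_neg (k : ℕ) :
    ∫ s in Set.Ioi (0 : ℝ), s ^ k * exp (-s) = k.factorial := by
  rw [← Real.Gamma_nat_eq_factorial, Real.Gamma_eq_integral (by positivity)]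
  refine setIntegral_congr_fun measurableSet_Ioi (fun s _ => ?_)
  simp only [add_sub_cancel_right, Real.rpow_natCast, mul_comm]

lemma integral_sub_pow_mul_eq_sum {μ : Measure ℝ} {w : ℝ → ℝ} {n : ℕ}
    (hw : ∀ k ≤ n, Integrable (fun s => s ^ k * w s) μ) (c : ℝ) :
    ∫ s, (s - c) ^ n * w s ∂μ =
      ∑ k ∈ range (n + 1), (n.choose k : ℝ) * (-c) ^ (n - k) * ∫ s, s ^ k * w s ∂μ := by
  have hexpand : ∀ s, (s - c) ^ n * w s =
      ∑ k ∈ range (n + 1), (n.choose k : ℝ) * (-c) ^ (n - k) * (s ^ k * w s) := fun s => by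
    rw [sub_eq_add_neg, add_pow, sum_mul]
    exact sum_congr rfl fun k _ => by ring
  simp_rw [hexpand]
  rw [integral_finsetSum _ fun k hk => (hw k (mem_range_succ_iff.1 hk)).const_mul _]
  simp_rw [integral_const_mul]

noncomputable def tailKernel (z s : ℝ) : ℝ := exp (-s - s ^ 2 / (2 * z ^ 2))

noncomputable def tailMoment (k : ℕ) (z : ℝ) : ℝ := ∫ s in Set.Ioi 0, s ^ k * tailKernel z s

noncomputable def tailMean (z : ℝ) : ℝ := tailMoment 1 z / tailMoment 0 z

noncomputable def tailCentralMoment (n : ℕ) (z : ℝ) : ℝ :=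
  ∫ s in Set.Ioi 0, (s - tailMean z) ^ n * tailKernel z s

lemma continuous_tailKernel (z : ℝ) : Continuous (tailKernel z) := by
  unfold tailKernel; fun_prop

lemma tailKernel_pos (z s : ℝ) : 0 < tailKernel z s := exp_pos _

lemma tailKernel_le_exp_neg (z s : ℝ) : tailKernel z s ≤ exp (-s) :=
  exp_le_exp.2 (sub_le_self _ (by positivity))

lemma norm_pow_mul_tailKernel_le (k : ℕ) (z : ℝ) {s : ℝ} (hs : 0 ≤ s) :
    ‖s ^ k * tailKernel z s‖ ≤ s ^ k * exp (-s) := by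
  rw [Real.norm_of_nonneg (mul_nonneg (pow_nonneg hs k) (tailKernel_pos z s).le)]
  exact mul_le_mul_of_nonneg_left (tailKernel_le_exp_neg z s) (pow_nonneg hs k)

lemma integrableOn_pow_mul_tailKernel (k : ℕ) (z : ℝ) :
    IntegrableOn (fun s => s ^ k * tailKernel z s) (Set.Ioi 0) :=
  (integrableOn_pow_mul_exp_neg k).mono'
    (by have := continuous_tailKernel z; fun_prop)
    ((ae_restrict_mem measurableSet_Ioi).mono fun _ hs => norm_pow_mul_tailKernel_le k z hs.le)

lemma tendsto_tailKernel (s : ℝ) :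
    Tendsto (fun z => tailKernel z s) atTop (𝓝 (exp (-s))) := by
  have hsq : Tendsto (fun z : ℝ => s ^ 2 / (2 * z ^ 2)) atTop (𝓝 0) :=
    tendsto_const_nhds.div_atTop
      ((tendsto_pow_atTop two_ne_zero).const_mul_atTop two_pos)
  simpa [tailKernel, Function.comp_def] using
    (continuous_exp.tendsto _).comp ((tendsto_const_nhds (x := -s)).sub hsq)

lemma tendsto_tailMoment (k : ℕ) :
    Tendsto (tailMoment k) atTop (𝓝 k.factorial) := by
  rw [← integral_pow_mul_exp_neg k]
  refine tendsto_integral_filter_of_dominated_convergence _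
    (Eventually.of_forall fun z => (integrableOn_pow_mul_tailKernel k z).aestronglyMeasurable)
    (Eventually.of_forall fun z => (ae_restrict_mem measurableSet_Ioi).mono
      fun _ hs => norm_pow_mul_tailKernel_le k z hs.le)
    (integrableOn_pow_mul_exp_neg k)
    (ae_of_all _ fun s => (tendsto_tailKernel s).const_mul _)

lemma tendsto_tailMean : Tendsto tailMean atTop (𝓝 1) := by
  have h := (tendsto_tailMoment 1).div (tendsto_tailMoment 0) (by simp)
  rwa [Nat.factorial_one, Nat.factorial_zero, Nat.cast_one, div_one] at h

lemma tendsto_tailCentralMoment (n : ℕ) :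
    Tendsto (tailCentralMoment n) atTop
      (𝓝 (∑ k ∈ range (n + 1), (n.choose k : ℝ) * (-1) ^ (n - k) * k.factorial)) := by
  have hsum : ∀ z, tailCentralMoment n z = ∑ k ∈ range (n + 1),
      (n.choose k : ℝ) * (-tailMean z) ^ (n - k) * tailMoment k z := fun z =>
    integral_sub_pow_mul_eq_sum (fun k _ => integrableOn_pow_mul_tailKernel k z) _
  simp_rw [funext hsum]
  exact tendsto_finsetSum _ fun k _ =>
    ((tendsto_tailMean.neg.pow _).const_mul _).mul (tendsto_tailMoment k)

noncomputable def tailSkewness (z : ℝ) : ℝ :=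
  tailCentralMoment 3 z / tailMoment 0 z /
    (tailCentralMoment 2 z / tailMoment 0 z) ^ ((3 : ℝ) / 2)

lemma tendsto_tailSkewness : Tendsto tailSkewness atTop (𝓝 2) := by
  have hmass : Tendsto (tailMoment 0) atTop (𝓝 1) := by simpa using tendsto_tailMoment 0
  have hvar : Tendsto (tailCentralMoment 2) atTop (𝓝 1) := by
    simpa [sum_range_succ] using tendsto_tailCentralMoment 2
  have hthird : Tendsto (tailCentralMoment 3) atTop (𝓝 2) := by
    convert tendsto_tailCentralMoment 3 using 2
    norm_num [sum_range_succ, Nat.factorial]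
  have hskew := (hthird.div hmass one_ne_zero).div
    ((hvar.div hmass one_ne_zero).rpow_const (p := (3 : ℝ) / 2) (by simp))
    (by simp)
  rw [div_one, div_one, one_rpow, div_one] at hskew
  exact hskew

lemma stdPhi_eq_gaussianPDFReal : stdPhi = gaussianPDFReal 0 1 := by
  ext t; simp [stdPhi, gaussianPDFReal]

lemma stdPhi_pos (t : ℝ) : 0 < stdPhi t :=
  stdPhi_eq_gaussianPDFReal ▸ gaussianPDFReal_pos 0 1 t one_ne_zero

lemma one_sub_stdCDF_eq_setIntegral (z : ℝ) : 1 - stdCDF z = ∫ t in Set.Ioi z, stdPhi t := by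
  have hint : Integrable stdPhi := stdPhi_eq_gaussianPDFReal ▸ integrable_gaussianPDFReal 0 1
  have htotal : ∫ t, stdPhi t = 1 :=
    stdPhi_eq_gaussianPDFReal ▸ integral_gaussianPDFReal_eq_one 0 one_ne_zero
  rw [← htotal, ← intervalIntegral.integral_Iic_add_Ioi hint.integrableOn hint.integrableOn,
    stdCDF, add_sub_cancel_left]

lemma stdPhi_add_div {z : ℝ} (hz : z ≠ 0) (s : ℝ) :
    stdPhi (z + s / z) = stdPhi z * tailKernel z s := by
  have hexp : -(z + s / z) ^ 2 / 2 = -z ^ 2 / 2 + (-s - s ^ 2 / (2 * z ^ 2)) := by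
    field_simp; ring
  rw [stdPhi, stdPhi, tailKernel, hexp, exp_add, mul_assoc]

lemma setIntegral_Ioi_comp_add_div {z : ℝ} (hz : 0 < z) (F : ℝ → ℝ) :
    ∫ s in Set.Ioi 0, F (z + s / z) = z * ∫ t in Set.Ioi z, F t := by
  have hind : ∀ s, (Set.Ioi 0).indicator (fun s => F (z + s / z)) s =
      (Set.Ioi z).indicator F (z + z⁻¹ * s) := fun s => by
    simp [Set.indicator_apply, div_eq_inv_mul, hz]
  rw [← integral_indicator measurableSet_Ioi, ← integral_indicator measurableSet_Ioi,
    funext hind, Measure.integral_comp_mul_left (fun u => (Set.Ioi z).indicator F (z + u)),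
    integral_add_left_eq_self, inv_inv, abs_of_pos hz, smul_eq_mul]

lemma setIntegral_Ioi_mul_stdPhi {z : ℝ} (hz : 0 < z) (f : ℝ → ℝ) :
    ∫ t in Set.Ioi z, f t * stdPhi t =
      stdPhi z / z * ∫ s in Set.Ioi 0, f (z + s / z) * tailKernel z s := by
  rw [← inv_mul_cancel_left₀ hz.ne' (∫ t in Set.Ioi z, f t * stdPhi t),
    ← setIntegral_Ioi_comp_add_div hz, ← integral_const_mul, ← integral_const_mul]
  congr 1 with s
  rw [stdPhi_add_div hz.ne']
  ring

lemma tailMoment_zero_pos (z : ℝ) : 0 < tailMoment 0 z := by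
  have : NeZero (volume.restrict (Set.Ioi (0 : ℝ))) := ⟨by simp⟩
  have hint := integrableOn_pow_mul_tailKernel 0 z
  simp only [tailMoment, pow_zero, one_mul, tailKernel] at hint ⊢
  exact integral_exp_pos hint

lemma one_sub_stdCDF_eq {z : ℝ} (hz : 0 < z) : 1 - stdCDF z = stdPhi z / z * tailMoment 0 z := by
  simpa [tailMoment, one_sub_stdCDF_eq_setIntegral] using
    setIntegral_Ioi_mul_stdPhi hz (fun _ => 1)

lemma setIntegral_mul_truncDensity {z : ℝ} (hz : 0 < z) (f : ℝ → ℝ) :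
    ∫ t in Set.Ioi z, f t * (stdPhi t / (1 - stdCDF z)) =
      (∫ s in Set.Ioi 0, f (z + s / z) * tailKernel z s) / tailMoment 0 z := by
  simp_rw [← mul_div_assoc]
  rw [integral_div, setIntegral_Ioi_mul_stdPhi hz, one_sub_stdCDF_eq hz]
  field_simp [(stdPhi_pos z).ne', hz.ne', (tailMoment_zero_pos z).ne']

lemma truncMean_eq {z : ℝ} (hz : 0 < z) : truncMean z = z + tailMean z / z := by
  have hsplit : ∀ s, (z + s / z) * tailKernel z s =
      z * (s ^ 0 * tailKernel z s) + z⁻¹ * (s ^ 1 * tailKernel z s) := fun s => by ring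
  rw [truncMean, setIntegral_mul_truncDensity hz, funext hsplit,
    integral_add ((integrableOn_pow_mul_tailKernel 0 z).const_mul z)
      ((integrableOn_pow_mul_tailKernel 1 z).const_mul z⁻¹),
    integral_const_mul, integral_const_mul, ← tailMoment, ← tailMoment, tailMean]
  field_simp [(tailMoment_zero_pos z).ne']

lemma setIntegral_sub_truncMean_pow_mul_truncDensity {z : ℝ} (hz : 0 < z) (n : ℕ) :
    ∫ t in Set.Ioi z, (t - truncMean z) ^ n * (stdPhi t / (1 - stdCDF z)) =
      tailCentralMoment n z / tailMoment 0 z / z ^ n := by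
  have hscale : ∀ s, (z + s / z - truncMean z) ^ n * tailKernel z s =
      (z ^ n)⁻¹ * ((s - tailMean z) ^ n * tailKernel z s) := fun s => by
    rw [truncMean_eq hz, ← inv_pow, ← mul_assoc, ← mul_pow]
    congr 2
    field_simp
    ring
  rw [setIntegral_mul_truncDensity hz, funext hscale, integral_const_mul, ← tailCentralMoment]
  ring

lemma truncSkewness_eq_tailSkewness {z : ℝ} (hz : 0 < z) :
    (∫ t in Set.Ioi z, (t - truncMean z) ^ 3 * (stdPhi t / (1 - stdCDF z))) /
        truncVar z ^ ((3 : ℝ) / 2) =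
      tailSkewness z := by
  have hvar : 0 ≤ tailCentralMoment 2 z / tailMoment 0 z :=
    div_nonneg (setIntegral_nonneg measurableSet_Ioi fun s _ =>
      mul_nonneg (sq_nonneg _) (tailKernel_pos z s).le) (tailMoment_zero_pos z).le
  have hscale : (z ^ 2) ^ ((3 : ℝ) / 2) = z ^ 3 := by
    rw [← rpow_natCast z 2, ← rpow_mul hz.le]
    norm_num
  rw [truncVar, setIntegral_sub_truncMean_pow_mul_truncDensity hz,
    setIntegral_sub_truncMean_pow_mul_truncDensity hz, div_rpow hvar (by positivity), hscale,
    div_div_div_cancel_right₀ (by positivity), tailSkewness]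

/-- The skewness of the standard normal truncated below at `z` tends to `2`
(the skewness of the exponential distribution) as `z → ∞`. -/
theorem stmt_16 :
    Tendsto
      (fun z =>
        (∫ t in Set.Ioi z, (t - truncMean z) ^ 3 * (stdPhi t / (1 - stdCDF z))) /
          (truncVar z) ^ ((3 : ℝ) / 2))
      atTop (nhds 2) := by
  refine tendsto_tailSkewness.congr' ?_
  filter_upwards [eventually_gt_atTop 0] with z hz
  exact (truncSkewness_eq_tailSkewness hz).symm
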